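/- Let W be a finite multiset of positive reals with |W| ≥ 2. For every weighted tree T ∈ 𝒯_W whose underlying graph is not a star, the sum of the reciprocals of the nonzero eigenvalues of the combinatorial Laplacian of T is strictly greater than the corresponding sum for the weighted star S_W; likewise, the sum of the reciprocals of the nonzero eigenvalues of the normalized Laplacian of T is strictly greater than the corresponding sum for S_W. (This expresses that S_W is the unique element of 𝒯_W minimizing both the average hitting time α and the Kemeny's constant κ.) -/

import Mathlib

open scoped Classical

noncomputable section

/-- A weighted graph on vertex set `Fin n`: a simple graph together with a symmetric
weight function which is positive on edges and zero on non-edges. -/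
structure WGraph (n : ℕ) where
  G : SimpleGraph (Fin n)
  w : Fin n → Fin n → ℝ
  symm : ∀ u v, w u v = w v u
  pos : ∀ u v, G.Adj u v → 0 < w u v
  zero : ∀ u v, ¬ G.Adj u v → w u v = 0

namespace WGraph

variable {n : ℕ}

/-- The weighted degree `d_G(u) = Σ_v ω(uv)`. -/
def deg (T : WGraph n) (u : Fin n) : ℝ := ∑ v, T.w u v

/-- The volume of the whole graph: sum of all weighted degrees. -/
def vol (T : WGraph n) : ℝ := ∑ u, T.deg u

/-- The combinatorial Laplacian `L = D - A`. -/
def lap (T : WGraph n) : Matrix (Fin n) (Fin n) ℝ :=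
  Matrix.of fun u v => (if u = v then T.deg u else 0) - T.w u v

/-- The normalized Laplacian `𝓛 = D^{-1/2} L D^{-1/2}`. -/
def nlap (T : WGraph n) : Matrix (Fin n) (Fin n) ℝ :=
  Matrix.of fun u v => T.lap u v / (Real.sqrt (T.deg u) * Real.sqrt (T.deg v))

/-- The weight of an (unordered) edge. -/
def ew (T : WGraph n) : Sym2 (Fin n) → ℝ := Sym2.lift ⟨T.w, T.symm⟩

/-- `ω(H)`: the product of the weights of all edges of a (spanning) subgraph `H`. -/
def wOf (T : WGraph n) (H : SimpleGraph (Fin n)) : ℝ := ∏ᶠ e ∈ H.edgeSet, T.ew e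

/-- `τ(G)`: the sum of `ω(H)` over all spanning trees `H` of `G`. -/
def tau (T : WGraph n) : ℝ :=
  ∑ᶠ H ∈ {H : SimpleGraph (Fin n) | H ≤ T.G ∧ H.IsTree}, T.wOf H

/-- The multiset of edge-weights of a weighted graph. -/
def edgeWeights (T : WGraph n) : Multiset ℝ := T.G.edgeFinset.val.map T.ew

end WGraph

/-- The sum of the reciprocals of the nonzero eigenvalues of a hermitian real matrix
(in `ℝ`, `0⁻¹ = 0`, so the zero eigenvalues contribute nothing to the sum). -/
def sumInvEig {n : ℕ} (M : Matrix (Fin n) (Fin n) ℝ) : ℝ :=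
  if h : M.IsHermitian then ∑ i, (h.eigenvalues i)⁻¹ else 0

/-- `H` is a spanning 2-forest of `G`: an acyclic subgraph of `G` on the full
vertex set with exactly two connected components. -/
def IsTwoForestOf {n : ℕ} (G H : SimpleGraph (Fin n)) : Prop :=
  H ≤ G ∧ H.IsAcyclic ∧ Nat.card H.ConnectedComponent = 2

/-- `S(F)`: the product of the numbers of vertices of the components of `F`. -/
def SVal {n : ℕ} (F : SimpleGraph (Fin n)) : ℝ :=
  ∏ᶠ c : F.ConnectedComponent, (Nat.card c.supp : ℝ)

/-- `V_T(F)`: the product over the components of `F` of their volumes in `T`,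
i.e. of the sums of `T`-degrees of their vertices. -/
def VVal {n : ℕ} (T : WGraph n) (F : SimpleGraph (Fin n)) : ℝ :=
  ∏ᶠ c : F.ConnectedComponent, ∑ᶠ u ∈ c.supp, T.deg u

/-- The number of vertices of the connected component of `v` in `H`. -/
def compSize {n : ℕ} (H : SimpleGraph (Fin n)) (v : Fin n) : ℕ :=
  Nat.card ((H.connectedComponentMk v).supp)

/-- The volume of the connected component of `v` in `H`, computed intrinsically
(with the weights of `T`): the sum over vertices `u` of the component of the sum of
weights of edges of the component at `u`. -/
def compVol {n : ℕ} (T : WGraph n) (H : SimpleGraph (Fin n)) (v : Fin n) : ℝ :=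
  ∑ᶠ u ∈ (H.connectedComponentMk v).supp, ∑ᶠ x ∈ (H.connectedComponentMk v).supp, T.w u x

/-- The common part of the two edge-transfer operations: `T'` is obtained from `T` by
deleting the edge `e₂ = v₂v₃` and adding the edge `v₁v₃` carrying the weight of `e₂`,
where `e₁ = v₁v₂` and `e₂ = v₂v₃` are adjacent edges of `T`. -/
def EdgeTransferAux {n : ℕ} (T T' : WGraph n) (v1 v2 v3 : Fin n) : Prop :=
  T.G.Adj v1 v2 ∧ T.G.Adj v2 v3 ∧ v1 ≠ v3 ∧
  T'.G = T.G.deleteEdges {s(v2, v3)} ⊔ SimpleGraph.fromEdgeSet {s(v1, v3)} ∧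
  T'.w v1 v3 = T.w v2 v3 ∧
  (∀ u v : Fin n, s(u, v) ≠ s(v1, v3) → s(u, v) ≠ s(v2, v3) → T'.w u v = T.w u v)

/-- `T` edge-transfers to `T'` with respect to size (via `v₁, v₂, v₃`):
the component `T₁` of `T ∖ {e₁, e₂}` containing `v₁` has more vertices than the
component `T₂` containing `v₂`. -/
def EdgeTransferSize {n : ℕ} (T T' : WGraph n) (v1 v2 v3 : Fin n) : Prop :=
  EdgeTransferAux T T' v1 v2 v3 ∧
  compSize (T.G.deleteEdges {s(v1, v2), s(v2, v3)}) v2 <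
    compSize (T.G.deleteEdges {s(v1, v2), s(v2, v3)}) v1

/-- `T` edge-transfers to `T'` with respect to volume (via `v₁, v₂, v₃`):
the component `T₁` of `T ∖ {e₁, e₂}` containing `v₁` has larger intrinsic volume than
the component `T₂` containing `v₂`. -/
def EdgeTransferVol {n : ℕ} (T T' : WGraph n) (v1 v2 v3 : Fin n) : Prop :=
  EdgeTransferAux T T' v1 v2 v3 ∧
  compVol T (T.G.deleteEdges {s(v1, v2), s(v2, v3)}) v2 <
    compVol T (T.G.deleteEdges {s(v1, v2), s(v2, v3)}) v1

/-- Isomorphism of weighted graphs: a graph isomorphism preserving the weights. -/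
def WIso {n : ℕ} (T T' : WGraph n) : Prop :=
  ∃ f : T.G ≃g T'.G, ∀ u v, T'.w (f u) (f v) = T.w u v

/-- The star graph on `Fin n`, centered at the vertex `0`. -/
def starGraph (n : ℕ) : SimpleGraph (Fin n) :=
  SimpleGraph.fromRel fun u _ => u.val = 0

/-- `T` is a polarized weighted path: its underlying graph is a path
`v₁ v₂ … v_n` and, writing `e_i = v_i v_{i+1}` and `c(e_i) = min {i, n - i}`,
one has `ω(e_i) ≥ ω(e_j)` whenever `c(e_i) ≤ c(e_j)`. -/
def IsPolarizedPath {n : ℕ} (T : WGraph n) : Prop :=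
  ∃ f : SimpleGraph.pathGraph n ≃g T.G,
    ∀ (i j : ℕ) (hi : i + 1 < n) (hj : j + 1 < n),
      min (i + 1) (n - 1 - i) ≤ min (j + 1) (n - 1 - j) →
      T.w (f ⟨j, by omega⟩) (f ⟨j + 1, hj⟩) ≤ T.w (f ⟨i, by omega⟩) (f ⟨i + 1, hi⟩)

/-- Unweighted: adjacency indicator. -/
def adjW {n : ℕ} (G : SimpleGraph (Fin n)) (u v : Fin n) : ℝ := if G.Adj u v then 1 else 0

/-- Unweighted degree. -/
def degG {n : ℕ} (G : SimpleGraph (Fin n)) (u : Fin n) : ℝ := ∑ v, adjW G u v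

/-- The combinatorial Laplacian `L = D - A` of a simple graph. -/
def lapG {n : ℕ} (G : SimpleGraph (Fin n)) : Matrix (Fin n) (Fin n) ℝ :=
  Matrix.of fun u v => (if u = v then degG G u else 0) - adjW G u v

/-- The normalized Laplacian `𝓛 = D^{-1/2} L D^{-1/2}` of a simple graph. -/
def nlapG {n : ℕ} (G : SimpleGraph (Fin n)) : Matrix (Fin n) (Fin n) ℝ :=
  Matrix.of fun u v => lapG G u v / (Real.sqrt (degG G u) * Real.sqrt (degG G v))

/-!
Give the vertices positive masses `m` and put `M = D_m^{-1/2} L D_m^{-1/2}`, so that `m = 1`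
gives `L` and `m = deg` gives `𝓛`. For a tree, `ker M` is spanned by `√m`. Deleting an edge `ab`
splits the tree into the side of `a` and the side of `b`, of masses `s_ab` and `s_ba`, and `L` maps
the indicator of the side of `a` to `ω(ab) (δ_a - δ_b)`. Centring this indicator for the masses and
rescaling it by `√m` gives a potential `p_ab`; summed over the edges, `X = Σ p_ab p_abᵀ / ω(ab)` is
a generalized inverse of `M` that vanishes on `ker M`. Hence the sum of the reciprocals of the
nonzero eigenvalues of `M` is `tr X = Σ s_ab s_ba / (ω(ab) ν)`, where `ν = s_ab + s_ba` is the
total mass.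

If both endpoints of `ab` have mass at least `t`, then `s_ab s_ba ≥ t (ν - t)`. Equality holds when
one endpoint is a leaf of mass `t`, and the inequality is strict when neither endpoint is a leaf.
Take `t = 1` for `L` and `t = ω(ab)` for `𝓛`: a vertex has degree at least the weight of each
incident edge, and equal to it at a leaf. Every edge of a star is pendant, while a tree that is not
a star has an edge joining two internal vertices. Since `ν` and `Σ t (ν - t) / (ω(ab) ν)` depend
only on the multiset of weights, the star attains the smaller sum.
-/

open Matrix in
theorem Matrix.IsHermitian.trace_eq_sum_dotProduct_eigenvectorBasis {ι : Type*} [Fintype ι]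
    [DecidableEq ι] {M : Matrix ι ι ℝ} (hM : M.IsHermitian) (X : Matrix ι ι ℝ) :
    X.trace = ∑ j, (hM.eigenvectorBasis j : ι → ℝ) ⬝ᵥ (X *ᵥ hM.eigenvectorBasis j) := by
  have htr : LinearMap.trace ℝ _ (toEuclideanLin X) = X.trace := by
    rw [toEuclideanLin_eq_toLin_orthonormal,
      LinearMap.trace_eq_matrix_trace ℝ (EuclideanSpace.basisFun ι ℝ).toBasis,
      LinearMap.toMatrix_toLin]
  rw [← htr, LinearMap.trace_eq_sum_inner _ hM.eigenvectorBasis]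
  simp [EuclideanSpace.inner_eq_star_dotProduct, dotProduct_comm]

open Matrix in
theorem sumInvEig_eq_trace {n : ℕ} {M X : Matrix (Fin n) (Fin n) ℝ} (hM : M.IsHermitian)
    (hMXM : M * X * M = M) {v : Fin n → ℝ} (hXv : X *ᵥ v = 0)
    (hker : ∀ x, M *ᵥ x = 0 → ∃ c : ℝ, x = c • v) : sumInvEig M = X.trace := by
  rw [sumInvEig, dif_pos hM, hM.trace_eq_sum_dotProduct_eigenvectorBasis]
  refine Finset.sum_congr rfl fun j _ => ?_
  set u := (hM.eigenvectorBasis j : Fin n → ℝ)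
  have hu : M *ᵥ u = hM.eigenvalues j • u := hM.mulVec_eigenvectorBasis j
  by_cases h : hM.eigenvalues j = 0
  · obtain ⟨c, hc⟩ := hker u (by rw [hu, h, zero_smul])
    simp [h, hc, mulVec_smul, hXv]
  have hnorm : u ⬝ᵥ u = 1 := by
    have := hM.eigenvectorBasis.inner_eq_one j
    rwa [EuclideanSpace.inner_eq_star_dotProduct, star_trivial] at this
  have hMt : Mᵀ = M := by rw [← conjTranspose_eq_transpose_of_trivial, hM.eq]
  have hMsymm : ∀ x y, (M *ᵥ x) ⬝ᵥ y = x ⬝ᵥ (M *ᵥ y) := fun x y => by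
    rw [dotProduct_mulVec, ← mulVec_transpose, hMt]
  have key : (M *ᵥ u) ⬝ᵥ (X *ᵥ (M *ᵥ u)) = u ⬝ᵥ (M *ᵥ u) := by
    rw [hMsymm, mulVec_mulVec, mulVec_mulVec, hMXM]
  rw [hu] at key
  simp only [mulVec_smul, smul_dotProduct, dotProduct_smul, hnorm, smul_eq_mul, mul_one] at key
  have hq : hM.eigenvalues j * (u ⬝ᵥ (X *ᵥ u) * hM.eigenvalues j) = hM.eigenvalues j * 1 := by
    linear_combination key
  exact (eq_inv_of_mul_eq_one_left (mul_left_cancel₀ h hq)).symm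

namespace SimpleGraph

variable {V : Type*} {G : SimpleGraph V}

theorem sum_sum_neighborFinset [Fintype V] (G : SimpleGraph V) {M : Type*} [AddCommMonoid M]
    (f : Sym2 V → M) : ∑ a, ∑ b ∈ G.neighborFinset a, f s(a, b) = 2 • ∑ e ∈ G.edgeFinset, f e := by
  have hdart : ∑ a, ∑ b ∈ G.neighborFinset a, f s(a, b) = ∑ d : G.Dart, f d.edge := by
    rw [← Finset.sum_fiberwise Finset.univ (fun d : G.Dart => d.fst)]
    refine Finset.sum_congr rfl fun a _ => ?_
    refine Finset.sum_bij' (fun b hb => ⟨(a, b), (G.mem_neighborFinset a b).1 hb⟩)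
      (fun d _ => d.snd) (by simp) ?_ (by simp) ?_ (by simp)
    all_goals
      rintro d hd
      obtain rfl := (Finset.mem_filter.1 hd).2
      simp
  rw [hdart, ← Finset.sum_fiberwise_of_maps_to (g := Dart.edge) (t := G.edgeFinset) (by simp),
    Finset.smul_sum]
  refine Finset.sum_congr rfl fun e he => ?_
  rw [Finset.sum_congr rfl (fun d hd => by rw [(Finset.mem_filter.1 hd).2]), Finset.sum_const,
    G.dart_edge_fiber_card e (mem_edgeFinset.1 he)]

section EdgeSide

variable [Fintype V] {a b u v z : V}

def edgeSide (G : SimpleGraph V) (a b : V) : Finset V :=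
  {u | (G.deleteEdges {s(a, b)}).Reachable a u}

lemma mem_edgeSide : u ∈ G.edgeSide a b ↔ (G.deleteEdges {s(a, b)}).Reachable a u := by
  simp [edgeSide]

lemma self_mem_edgeSide : a ∈ G.edgeSide a b := mem_edgeSide.2 .rfl

lemma mem_edgeSide_iff_of_adj (huv : G.Adj u v) (h : s(u, v) ≠ s(a, b)) :
    u ∈ G.edgeSide a b ↔ v ∈ G.edgeSide a b := by
  have hadj : (G.deleteEdges {s(a, b)}).Adj u v := by simpa [huv] using h
  simp only [mem_edgeSide]
  exact ⟨fun h => h.trans hadj.reachable, fun h => h.trans hadj.symm.reachable⟩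

lemma mem_edgeSide_of_adj (h : G.Adj a z) (hz : z ≠ b) : z ∈ G.edgeSide a b :=
  (mem_edgeSide_iff_of_adj h fun h => hz (Sym2.congr_right.1 h)).1 self_mem_edgeSide

lemma edgeSide_eq_singleton (h : ∀ z, G.Adj a z → z = b) : G.edgeSide a b = {a} := by
  refine Finset.eq_singleton_iff_unique_mem.2 ⟨self_mem_edgeSide, fun u hu => ?_⟩
  obtain ⟨p⟩ := mem_edgeSide.1 hu
  cases p with
  | nil => rfl
  | cons hadj _ =>
    rw [deleteEdges_adj] at hadj
    exact (hadj.2 (by rw [h _ hadj.1]; exact Set.mem_singleton _)).elim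

lemma mem_edgeSide_or (hG : G.Preconnected) (a b u : V) :
    u ∈ G.edgeSide a b ∨ u ∈ G.edgeSide b a := by
  have step : ∀ {x y}, G.Adj x y → (x ∈ G.edgeSide a b ∨ x ∈ G.edgeSide b a) →
      (y ∈ G.edgeSide a b ∨ y ∈ G.edgeSide b a) := fun {x y} hxy hx => by
    by_cases he : s(x, y) = s(a, b)
    · rcases Sym2.eq_iff.1 he with ⟨-, rfl⟩ | ⟨-, rfl⟩
      · exact .inr self_mem_edgeSide
      · exact .inl self_mem_edgeSide
    · rwa [← mem_edgeSide_iff_of_adj hxy he,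
        ← mem_edgeSide_iff_of_adj hxy (by rwa [Sym2.eq_swap (a := b)])]
  induction (reachable_iff_reflTransGen a u).1 (hG a u) with
  | refl => exact .inl self_mem_edgeSide
  | tail _ hxy ih => exact step hxy ih

lemma disjoint_edgeSide (hG : G.IsAcyclic) (hab : G.Adj a b) :
    Disjoint (G.edgeSide a b) (G.edgeSide b a) := by
  refine Finset.disjoint_left.2 fun u hua hub => ?_
  rw [mem_edgeSide] at hua hub
  rw [Sym2.eq_swap] at hub
  exact isAcyclic_iff_forall_adj_isBridge.1 hG hab (hua.trans hub.symm)

lemma compl_edgeSide (hG : G.IsTree) (hab : G.Adj a b) : (G.edgeSide a b)ᶜ = G.edgeSide b a := by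
  ext u
  rw [Finset.mem_compl]
  refine ⟨(mem_edgeSide_or hG.connected.preconnected a b u).resolve_left, fun hu h => ?_⟩
  exact Finset.disjoint_left.1 (disjoint_edgeSide hG.isAcyclic hab) h hu

lemma sum_edgeSide_swap (hG : G.IsTree) (hab : G.Adj a b) (m : V → ℝ) :
    ∑ u ∈ G.edgeSide b a, m u = ∑ u, m u - ∑ u ∈ G.edgeSide a b, m u := by
  rw [← compl_edgeSide hG hab, eq_sub_iff_add_eq, Finset.sum_compl_add_sum]

lemma le_sum_edgeSide {m : V → ℝ} (hm : ∀ u, 0 ≤ m u) : m a ≤ ∑ u ∈ G.edgeSide a b, m u :=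
  Finset.single_le_sum (fun u _ => hm u) self_mem_edgeSide

lemma add_le_sum_edgeSide {m : V → ℝ} (hm : ∀ u, 0 ≤ m u) (h : G.Adj a z) (hz : z ≠ b) :
    m a + m z ≤ ∑ u ∈ G.edgeSide a b, m u := by
  rw [← Finset.sum_pair h.ne]
  refine Finset.sum_le_sum_of_subset_of_nonneg ?_ fun u _ _ => hm u
  exact Finset.insert_subset self_mem_edgeSide
    (Finset.singleton_subset_iff.2 (mem_edgeSide_of_adj h hz))

lemma IsTree.mul_sub_le_sum_edgeSide_mul (hG : G.IsTree) (hab : G.Adj a b) {m : V → ℝ}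
    (hm : ∀ u, 0 ≤ m u) {t : ℝ} (ha : t ≤ m a) (hb : t ≤ m b) :
    t * (∑ u, m u - t) ≤ (∑ u ∈ G.edgeSide a b, m u) * ∑ u ∈ G.edgeSide b a, m u := by
  have hx := ha.trans (le_sum_edgeSide (G := G) (b := b) hm)
  have hy := hb.trans (le_sum_edgeSide (G := G) (b := a) hm)
  rw [sum_edgeSide_swap hG hab] at hy ⊢
  nlinarith [mul_nonneg (sub_nonneg.2 hx) (sub_nonneg.2 hy)]

lemma IsTree.mul_sub_lt_sum_edgeSide_mul (hG : G.IsTree) (hab : G.Adj a b) {m : V → ℝ}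
    (hm : ∀ u, 0 < m u) {t : ℝ} (ha : t ≤ m a) (hb : t ≤ m b) {z z' : V} (haz : G.Adj a z)
    (hzb : z ≠ b) (hbz' : G.Adj b z') (hz'a : z' ≠ a) :
    t * (∑ u, m u - t) < (∑ u ∈ G.edgeSide a b, m u) * ∑ u ∈ G.edgeSide b a, m u := by
  have hm₀ : ∀ u, 0 ≤ m u := fun u => (hm u).le
  have hx : t < ∑ u ∈ G.edgeSide a b, m u := by
    linarith [add_le_sum_edgeSide hm₀ haz hzb, hm z]
  have hy : t < ∑ u ∈ G.edgeSide b a, m u := by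
    linarith [add_le_sum_edgeSide hm₀ hbz' hz'a, hm z']
  rw [sum_edgeSide_swap hG hab] at hy ⊢
  nlinarith [mul_pos (sub_pos.2 hx) (sub_pos.2 hy)]

end EdgeSide

lemma IsTree.exists_adj_adj_ne [Fintype V] (hG : G.IsTree) (hV : 3 ≤ Fintype.card V) :
    ∃ c z₁ z₂, G.Adj c z₁ ∧ G.Adj c z₂ ∧ z₁ ≠ z₂ := by
  by_contra! h
  have hdeg : ∀ u, G.degree u ≤ 1 := fun u => Finset.card_le_one.2 fun z₁ h₁ z₂ h₂ =>
    h u z₁ z₂ ((G.mem_neighborFinset u z₁).1 h₁) ((G.mem_neighborFinset u z₂).1 h₂)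
  have hsum : 2 * G.edgeFinset.card ≤ Fintype.card V := by
    rw [← sum_degrees_eq_twice_card_edges, ← Finset.card_univ, Finset.card_eq_sum_ones]
    exact Finset.sum_le_sum fun u _ => hdeg u
  have := hG.card_edgeFinset
  omega

lemma IsTree.exists_eq_starGraph [Fintype V] (hG : G.IsTree) (hV : 3 ≤ Fintype.card V)
    (h : ∀ a b, G.Adj a b → (∀ z, G.Adj a z → z = b) ∨ (∀ z, G.Adj b z → z = a)) :
    ∃ c, G = starGraph c := by
  obtain ⟨c, z₁, z₂, h₁, h₂, hz⟩ := hG.exists_adj_adj_ne hV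
  have hleaf : ∀ u, G.Adj c u → ∀ z, G.Adj u z → z = c := fun u hu =>
    (h c u hu).resolve_left fun hc => hz ((hc z₁ h₁).trans (hc z₂ h₂).symm)
  have hcenter : ∀ u, u = c ∨ G.Adj c u := fun u => by
    induction (reachable_iff_reflTransGen c u).1 (hG.connected c u) with
    | refl => exact .inl rfl
    | tail _ hxy ih =>
      rcases ih with rfl | hx
      · exact .inr hxy
      · exact .inl (hleaf _ hx _ hxy)
  refine ⟨c, SimpleGraph.ext <| funext₂ fun u v => propext ⟨fun huv => ⟨huv.ne, ?_⟩, ?_⟩⟩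
  · rcases hcenter u with rfl | hu
    · exact .inl rfl
    · exact .inr (hleaf u hu v huv)
  · rintro ⟨huv, rfl | rfl⟩
    · exact (hcenter v).resolve_left (Ne.symm huv)
    · exact ((hcenter u).resolve_left huv).symm

lemma IsTree.exists_internal_edge [Fintype V] (hG : G.IsTree) (hV : 3 ≤ Fintype.card V)
    (h : ¬ ∃ c, G = starGraph c) :
    ∃ a b, G.Adj a b ∧ (∃ z, G.Adj a z ∧ z ≠ b) ∧ ∃ z', G.Adj b z' ∧ z' ≠ a := by
  by_contra! hno
  exact h (hG.exists_eq_starGraph hV fun a b hab =>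
    or_iff_not_imp_left.2 fun ha z' hz' => hno a b hab (by push Not at ha; exact ha) z' hz')

lemma starGraph_adj_forall_or {c a b : V} (hab : (starGraph c).Adj a b) :
    (∀ z, (starGraph c).Adj a z → z = b) ∨ (∀ z, (starGraph c).Adj b z → z = a) := by
  simp only [starGraph_adj] at *
  grind

end SimpleGraph

lemma starGraph_adj_iff {n : ℕ} {u v : Fin n} :
    (starGraph n).Adj u v ↔ u ≠ v ∧ (u.val = 0 ∨ v.val = 0) := by
  simp [starGraph]

lemma exists_eq_starGraph_of_iso {n : ℕ} {G : SimpleGraph (Fin n)} (hn : 0 < n)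
    (f : G ≃g starGraph n) : ∃ c, G = SimpleGraph.starGraph c := by
  refine ⟨f.symm ⟨0, hn⟩, SimpleGraph.ext <| funext₂ fun u v => propext ?_⟩
  have h0 : ∀ x, (f x).val = 0 ↔ x = f.symm ⟨0, hn⟩ := fun x => by
    rw [RelIso.eq_symm_apply, Fin.ext_iff]
  rw [← f.map_adj_iff, starGraph_adj_iff, SimpleGraph.starGraph_adj, f.injective.ne_iff, h0, h0]

lemma nonempty_starGraph_iso {n : ℕ} (c : Fin n) :
    Nonempty (SimpleGraph.starGraph c ≃g starGraph n) := by
  have hn : 0 < n := c.pos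
  refine ⟨⟨Equiv.swap c ⟨0, hn⟩, fun {u v} => ?_⟩⟩
  have h0 : ∀ x, (Equiv.swap c ⟨0, hn⟩ x).val = 0 ↔ x = c := fun x => by
    rw [← Fin.ext_iff (b := ⟨0, hn⟩), Equiv.swap_apply_eq_iff, Equiv.swap_apply_right]
  rw [starGraph_adj_iff, SimpleGraph.starGraph_adj, (Equiv.swap c _).injective.ne_iff, h0, h0]

namespace WGraph

open Matrix SimpleGraph

variable {n : ℕ} (T : WGraph n)

lemma w_nonneg (u v : Fin n) : 0 ≤ T.w u v := by
  by_cases h : T.G.Adj u v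
  · exact (T.pos u v h).le
  · rw [T.zero u v h]

lemma card_edgeWeights (hT : T.G.IsTree) :
    Multiset.card T.edgeWeights + 1 = n := by
  simpa [edgeWeights] using hT.card_edgeFinset

lemma sum_edgeFinset_ew (f : ℝ → ℝ) :
    ∑ e ∈ T.G.edgeFinset, f (T.ew e) = (T.edgeWeights.map f).sum := by
  rw [edgeWeights, Multiset.map_map]
  rfl

lemma sum_sum_neighborFinset_w (f : ℝ → ℝ) :
    ∑ a, ∑ b ∈ T.G.neighborFinset a, f (T.w a b) = 2 * (T.edgeWeights.map f).sum := by
  rw [← sum_edgeFinset_ew, two_mul, ← two_nsmul,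
    ← T.G.sum_sum_neighborFinset fun e => f (T.ew e)]
  rfl

lemma sum_neighborFinset_w (a : Fin n) : ∑ b ∈ T.G.neighborFinset a, T.w a b = T.deg a :=
  Finset.sum_subset (Finset.subset_univ _) fun b _ hb => T.zero a b (by simpa using hb)

lemma w_le_deg (a b : Fin n) : T.w a b ≤ T.deg a :=
  Finset.single_le_sum (fun v _ => T.w_nonneg a v) (Finset.mem_univ b)

lemma deg_eq_w_of_forall_adj {a b : Fin n} (hab : T.G.Adj a b)
    (h : ∀ z, T.G.Adj a z → z = b) : T.deg a = T.w a b := by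
  rw [← sum_neighborFinset_w, Finset.sum_eq_single_of_mem b ((T.G.mem_neighborFinset a b).2 hab)]
  exact fun z hz hzb => absurd (h z ((T.G.mem_neighborFinset a z).1 hz)) hzb

lemma deg_pos (hT : T.G.IsTree) (hn : 2 ≤ n) (a : Fin n) : 0 < T.deg a := by
  have : Nontrivial (Fin n) := Fin.nontrivial_iff_two_le.2 hn
  obtain ⟨b, hab⟩ := hT.connected.preconnected.exists_adj_of_nontrivial a
  exact (T.pos a b hab).trans_le (T.w_le_deg a b)

lemma sum_deg : ∑ u, T.deg u = 2 * T.edgeWeights.sum := by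
  simp_rw [← sum_neighborFinset_w]
  simpa using T.sum_sum_neighborFinset_w id

def scaledLap (m : Fin n → ℝ) : Matrix (Fin n) (Fin n) ℝ :=
  Matrix.of fun u v => T.lap u v / (√(m u) * √(m v))

lemma lap_eq_scaledLap_one : T.lap = T.scaledLap 1 := by
  ext u v
  simp [scaledLap]

lemma nlap_eq_scaledLap_deg : T.nlap = T.scaledLap T.deg := rfl

lemma scaledLap_transpose (m : Fin n → ℝ) : (T.scaledLap m)ᵀ = T.scaledLap m := by
  ext u v
  rcases eq_or_ne u v with rfl | h
  · rfl
  · simp [scaledLap, lap, h, h.symm, T.symm u v, mul_comm]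

lemma scaledLap_isHermitian (m : Fin n → ℝ) : (T.scaledLap m).IsHermitian := by
  rw [IsHermitian, conjTranspose_eq_transpose_of_trivial, scaledLap_transpose]

def incVec (m : Fin n → ℝ) (a b : Fin n) : Fin n → ℝ :=
  fun u => (Pi.single a 1 - Pi.single b 1 : Fin n → ℝ) u / √(m u)

lemma incVec_dotProduct (m : Fin n → ℝ) (a b : Fin n) (x : Fin n → ℝ) :
    incVec m a b ⬝ᵥ x = x a / √(m a) - x b / √(m b) := by
  simp only [dotProduct, incVec, Pi.sub_apply, Pi.single_apply, sub_div, ite_div, one_div,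
    zero_div, sub_mul, ite_mul, zero_mul, Finset.sum_sub_distrib, Finset.sum_ite_eq',
    Finset.mem_univ, ↓reduceIte]
  ring

lemma lap_apply_eq_sum (u v : Fin n) : T.lap u v = ∑ a, ∑ b, T.w a b / 2 *
    ((Pi.single a 1 - Pi.single b 1 : Fin n → ℝ) u *
      (Pi.single a 1 - Pi.single b 1 : Fin n → ℝ) v) := by
  simp only [lap, deg, of_apply, Pi.sub_apply, Pi.single_apply, mul_sub, mul_ite, mul_one,
    mul_zero, Finset.sum_sub_distrib, Finset.sum_ite_irrel, Finset.sum_const_zero,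
    Finset.sum_ite_eq, Finset.mem_univ, ↓reduceIte, T.symm v u]
  split_ifs with h
  · subst h
    simp_rw [T.symm _ u, ← Finset.sum_div]
    ring
  · ring

/-- Each edge is counted once from each endpoint, hence the factor `1 / 2`. -/
lemma scaledLap_eq_sum (m : Fin n → ℝ) :
    T.scaledLap m = ∑ a, ∑ b ∈ T.G.neighborFinset a,
      (T.w a b / 2) • vecMulVec (incVec m a b) (incVec m a b) := by
  ext u v
  simp only [scaledLap, of_apply, lap_apply_eq_sum, Finset.sum_div, Matrix.sum_apply,
    Matrix.smul_apply, vecMulVec_apply, incVec, smul_eq_mul]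
  refine Finset.sum_congr rfl fun a _ => ?_
  rw [← Finset.sum_subset (Finset.subset_univ _) fun b _ hb => ?_]
  · exact Finset.sum_congr rfl fun b _ => by ring
  · rw [T.zero a b (by simpa using hb)]
    ring

lemma dotProduct_scaledLap_mulVec (m : Fin n → ℝ) (x : Fin n → ℝ) :
    x ⬝ᵥ (T.scaledLap m *ᵥ x) =
      ∑ a, ∑ b ∈ T.G.neighborFinset a, T.w a b / 2 * (incVec m a b ⬝ᵥ x) ^ 2 := by
  simp only [scaledLap_eq_sum, sum_mulVec, dotProduct_sum, smul_mulVec, vecMulVec_mulVec,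
    op_smul_eq_smul, dotProduct_smul, smul_eq_mul]
  refine Finset.sum_congr rfl fun a _ => Finset.sum_congr rfl fun b _ => ?_
  rw [dotProduct_comm x]
  ring

lemma exists_eq_smul_sqrt_of_scaledLap_mulVec_eq_zero (hT : T.G.IsTree) {m : Fin n → ℝ}
    (hm : ∀ u, 0 < m u) {x : Fin n → ℝ} (hx : T.scaledLap m *ᵥ x = 0) :
    ∃ c : ℝ, x = c • fun u => √(m u) := by
  have hsum := T.dotProduct_scaledLap_mulVec m x
  rw [hx, dotProduct_zero, eq_comm] at hsum
  have hnonneg : ∀ a b, 0 ≤ T.w a b / 2 * (incVec m a b ⬝ᵥ x) ^ 2 := fun a b => by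
    have := T.w_nonneg a b
    positivity
  have hadj : ∀ a b, T.G.Adj a b → x a / √(m a) = x b / √(m b) := by
    intro a b hab
    have hterm := (Finset.sum_eq_zero_iff_of_nonneg fun b _ => hnonneg a b).1
      ((Finset.sum_eq_zero_iff_of_nonneg fun a _ => Finset.sum_nonneg fun b _ => hnonneg a b).1
        hsum a (Finset.mem_univ a)) b ((T.G.mem_neighborFinset a b).2 hab)
    rw [incVec_dotProduct, mul_eq_zero, pow_eq_zero_iff two_ne_zero, sub_eq_zero] at hterm
    exact hterm.resolve_left (by linarith [T.pos a b hab])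
  obtain ⟨v₀⟩ := hT.connected.nonempty
  refine ⟨x v₀ / √(m v₀), funext fun u => ?_⟩
  have hu : x u / √(m u) = x v₀ / √(m v₀) := by
    induction (reachable_iff_reflTransGen u v₀).1 (hT.connected u v₀) with
    | refl => rfl
    | tail _ hyz ih => exact ih.trans (hadj _ _ hyz)
  rw [Pi.smul_apply, smul_eq_mul, ← hu, div_mul_cancel₀ _ (Real.sqrt_pos.2 (hm u)).ne']

lemma lap_mulVec_apply (x : Fin n → ℝ) (u : Fin n) :
    (T.lap *ᵥ x) u = ∑ v, T.w u v * (x u - x v) := by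
  simp [mulVec, dotProduct, lap, deg, sub_mul, mul_sub, Finset.sum_sub_distrib, Finset.sum_mul]

lemma lap_mulVec_indicator_edgeSide (hT : T.G.IsTree) {a b : Fin n} (hab : T.G.Adj a b) :
    T.lap *ᵥ (fun u => if u ∈ T.G.edgeSide a b then 1 else 0) =
      T.w a b • (Pi.single a 1 - Pi.single b 1) := by
  have ha : a ∈ T.G.edgeSide a b := self_mem_edgeSide
  have hb : b ∉ T.G.edgeSide a b := fun h =>
    Finset.disjoint_left.1 (disjoint_edgeSide hT.isAcyclic hab) h self_mem_edgeSide
  have hcross : ∀ u v, s(u, v) ≠ s(a, b) → T.w u v *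
      ((if u ∈ T.G.edgeSide a b then 1 else 0) - (if v ∈ T.G.edgeSide a b then 1 else 0)) = 0 := by
    intro u v h
    by_cases huv : T.G.Adj u v
    · simp only [mem_edgeSide_iff_of_adj huv h, sub_self, mul_zero]
    · rw [T.zero u v huv, zero_mul]
  funext u
  rw [lap_mulVec_apply]
  by_cases hua : u = a
  · subst hua
    rw [Finset.sum_eq_single b (fun v _ hv => hcross _ _ fun h => hv (Sym2.congr_right.1 h))
      (by simp)]
    simp [ha, hb, hab.ne]
  by_cases hub : u = b
  · subst hub
    rw [Finset.sum_eq_single a (fun v _ hv => hcross _ _ fun h => ?_) (by simp)]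
    · simp [ha, hb, hab.ne, T.symm u a]
    · rcases Sym2.eq_iff.1 h with ⟨h1, -⟩ | ⟨-, h2⟩
      exacts [hab.ne h1.symm, hv h2]
  rw [Finset.sum_eq_zero fun v _ => hcross _ _ fun h => ?_]
  · simp [hua, hub]
  · rcases Sym2.eq_iff.1 h with ⟨h1, -⟩ | ⟨h1, -⟩
    exacts [hua h1, hub h1]

def sidePot (m : Fin n → ℝ) (a b : Fin n) : Fin n → ℝ := fun u =>
  √(m u) * ((if u ∈ T.G.edgeSide a b then 1 else 0) - (∑ x ∈ T.G.edgeSide a b, m x) / ∑ x, m x)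

lemma scaledLap_mulVec_sidePot (hT : T.G.IsTree) {m : Fin n → ℝ} (hm : ∀ u, 0 < m u)
    {a b : Fin n} (hab : T.G.Adj a b) :
    T.scaledLap m *ᵥ T.sidePot m a b = T.w a b • incVec m a b := by
  set c : Fin n → ℝ := fun u => (if u ∈ T.G.edgeSide a b then 1 else 0) -
    (∑ x ∈ T.G.edgeSide a b, m x) / ∑ x, m x
  have hc : T.lap *ᵥ c = T.lap *ᵥ fun u => if u ∈ T.G.edgeSide a b then 1 else 0 := by
    funext u
    simp only [lap_mulVec_apply, c, sub_sub_sub_cancel_right]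
  funext u
  have hsq : ∀ v, √(m v) ≠ 0 := fun v => (Real.sqrt_pos.2 (hm v)).ne'
  have hMc : (T.scaledLap m *ᵥ T.sidePot m a b) u = (T.lap *ᵥ c) u / √(m u) := by
    simp only [mulVec, dotProduct]
    rw [Finset.sum_div]
    refine Finset.sum_congr rfl fun v _ => ?_
    simp only [scaledLap, of_apply, sidePot, c]
    field_simp [hsq u, hsq v]
  rw [hMc, hc, lap_mulVec_indicator_edgeSide T hT hab]
  simp [incVec, mul_div_assoc]

lemma sidePot_dotProduct_sqrt {m : Fin n → ℝ} (hm : ∀ u, 0 ≤ m u) (hν : ∑ u, m u ≠ 0)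
    (a b : Fin n) : T.sidePot m a b ⬝ᵥ (fun u => √(m u)) = 0 := by
  have h : ∀ u, T.sidePot m a b u * √(m u) = (if u ∈ T.G.edgeSide a b then m u else 0) -
      m u * ((∑ x ∈ T.G.edgeSide a b, m x) / ∑ x, m x) := fun u => by
    simp only [sidePot]
    rw [mul_comm, ← mul_assoc, Real.mul_self_sqrt (hm u)]
    split_ifs <;> ring
  simp only [dotProduct, h, Finset.sum_sub_distrib, ← Finset.sum_mul, Finset.sum_ite_mem,
    Finset.univ_inter]
  field_simp
  ring

lemma sidePot_dotProduct_self {m : Fin n → ℝ} (hm : ∀ u, 0 ≤ m u) (hν : ∑ u, m u ≠ 0)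
    (a b : Fin n) : T.sidePot m a b ⬝ᵥ T.sidePot m a b =
      (∑ x ∈ T.G.edgeSide a b, m x) * (∑ x, m x - ∑ x ∈ T.G.edgeSide a b, m x) / ∑ x, m x := by
  set k := (∑ x ∈ T.G.edgeSide a b, m x) / ∑ x, m x
  have h : ∀ u, T.sidePot m a b u * T.sidePot m a b u =
      (if u ∈ T.G.edgeSide a b then m u else 0) * (1 - 2 * k) + m u * k ^ 2 := fun u => by
    simp only [sidePot]
    rw [mul_mul_mul_comm, Real.mul_self_sqrt (hm u)]
    split_ifs <;> ring
  simp only [dotProduct, h, Finset.sum_add_distrib, ← Finset.sum_mul, Finset.sum_ite_mem,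
    Finset.univ_inter, k]
  field_simp
  ring

def green (m : Fin n → ℝ) : Matrix (Fin n) (Fin n) ℝ :=
  ∑ a, ∑ b ∈ T.G.neighborFinset a,
    (2 * T.w a b)⁻¹ • vecMulVec (T.sidePot m a b) (T.sidePot m a b)

lemma scaledLap_mul_green_mul_scaledLap (hT : T.G.IsTree) {m : Fin n → ℝ}
    (hm : ∀ u, 0 < m u) : T.scaledLap m * T.green m * T.scaledLap m = T.scaledLap m := by
  conv_rhs => rw [scaledLap_eq_sum]
  simp only [green, Finset.mul_sum, Finset.sum_mul]
  refine Finset.sum_congr rfl fun a _ => Finset.sum_congr rfl fun b hb => ?_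
  have hab : T.G.Adj a b := (T.G.mem_neighborFinset a b).1 hb
  rw [mul_smul_comm, smul_mul_assoc, mul_vecMulVec, vecMulVec_mul, ← mulVec_transpose,
    scaledLap_transpose, scaledLap_mulVec_sidePot T hT hm hab, smul_vecMulVec, vecMulVec_smul,
    smul_smul, smul_smul]
  congr 1
  field_simp [(T.pos a b hab).ne']

lemma green_mulVec_sqrt {m : Fin n → ℝ} (hm : ∀ u, 0 ≤ m u) (hν : ∑ u, m u ≠ 0) :
    T.green m *ᵥ (fun u => √(m u)) = 0 := by
  simp only [green, sum_mulVec, smul_mulVec, vecMulVec_mulVec, T.sidePot_dotProduct_sqrt hm hν,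
    MulOpposite.op_zero, zero_smul, smul_zero, Finset.sum_const_zero]

lemma trace_green {m : Fin n → ℝ} (hm : ∀ u, 0 ≤ m u) (hν : ∑ u, m u ≠ 0) :
    (T.green m).trace = ∑ a, ∑ b ∈ T.G.neighborFinset a,
      (∑ x ∈ T.G.edgeSide a b, m x) * (∑ x, m x - ∑ x ∈ T.G.edgeSide a b, m x) /
        (2 * T.w a b * ∑ x, m x) := by
  simp only [green, trace_sum, trace_smul, trace_vecMulVec, T.sidePot_dotProduct_self hm hν,
    smul_eq_mul]
  refine Finset.sum_congr rfl fun a _ => Finset.sum_congr rfl fun b _ => ?_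
  ring

theorem sumInvEig_scaledLap (hT : T.G.IsTree) {m : Fin n → ℝ} (hm : ∀ u, 0 < m u) :
    sumInvEig (T.scaledLap m) = ∑ a, ∑ b ∈ T.G.neighborFinset a,
      (∑ x ∈ T.G.edgeSide a b, m x) * (∑ x ∈ T.G.edgeSide b a, m x) /
        (2 * T.w a b * ∑ x, m x) := by
  have hm₀ : ∀ u, 0 ≤ m u := fun u => (hm u).le
  have := hT.connected.nonempty
  have hν : ∑ u, m u ≠ 0 := (Finset.sum_pos (fun u _ => hm u) Finset.univ_nonempty).ne'
  rw [sumInvEig_eq_trace (T.scaledLap_isHermitian m) (T.scaledLap_mul_green_mul_scaledLap hT hm)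
    (T.green_mulVec_sqrt hm₀ hν)
    fun x hx => T.exists_eq_smul_sqrt_of_scaledLap_mulVec_eq_zero hT hm hx, T.trace_green hm₀ hν]
  refine Finset.sum_congr rfl fun a _ => Finset.sum_congr rfl fun b hb => ?_
  rw [sum_edgeSide_swap hT ((T.G.mem_neighborFinset a b).1 hb)]

variable {T}

lemma sumInvEig_scaledLap_of_eq_starGraph {S : WGraph n} (hS : S.G.IsTree) {m : Fin n → ℝ}
    (hm : ∀ u, 0 < m u) (t : ℝ → ℝ)
    (ht : ∀ a b, S.G.Adj a b → (∀ z, S.G.Adj a z → z = b) → m a = t (S.w a b))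
    {c : Fin n} (hc : S.G = SimpleGraph.starGraph c) :
    sumInvEig (S.scaledLap m) = ∑ a, ∑ b ∈ S.G.neighborFinset a,
      t (S.w a b) * (∑ u, m u - t (S.w a b)) / (2 * S.w a b * ∑ u, m u) := by
  rw [S.sumInvEig_scaledLap hS hm]
  refine Finset.sum_congr rfl fun a _ => Finset.sum_congr rfl fun b hb => ?_
  have hab := (S.G.mem_neighborFinset a b).1 hb
  rcases starGraph_adj_forall_or (hc ▸ hab) with h | h <;> rw [← hc] at h
  · rw [sum_edgeSide_swap hS hab, edgeSide_eq_singleton h, Finset.sum_singleton, ht a b hab h]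
  · rw [sum_edgeSide_swap hS hab.symm, edgeSide_eq_singleton h, Finset.sum_singleton,
      ht b a hab.symm h, S.symm b a]
    ring

lemma lt_sumInvEig_scaledLap (hn : 3 ≤ n) (hT : T.G.IsTree) {m : Fin n → ℝ}
    (hm : ∀ u, 0 < m u) (t : ℝ → ℝ) (ht : ∀ a b, T.G.Adj a b → t (T.w a b) ≤ m a)
    (hnstar : ¬ ∃ c, T.G = SimpleGraph.starGraph c) :
    ∑ a, ∑ b ∈ T.G.neighborFinset a,
      t (T.w a b) * (∑ u, m u - t (T.w a b)) / (2 * T.w a b * ∑ u, m u) <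
        sumInvEig (T.scaledLap m) := by
  rw [T.sumInvEig_scaledLap hT hm]
  have := hT.connected.nonempty
  have hpos : ∀ a b, T.G.Adj a b → 0 < 2 * T.w a b * ∑ u, m u := fun a b hab => by
    have := T.pos a b hab
    have := Finset.sum_pos (fun u _ => hm u) Finset.univ_nonempty
    positivity
  have ht' : ∀ a b, T.G.Adj a b → t (T.w a b) ≤ m b := fun a b hab =>
    T.symm a b ▸ ht b a hab.symm
  have hle : ∀ a, ∀ b ∈ T.G.neighborFinset a,
      t (T.w a b) * (∑ u, m u - t (T.w a b)) / (2 * T.w a b * ∑ u, m u) ≤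
        (∑ x ∈ T.G.edgeSide a b, m x) * (∑ x ∈ T.G.edgeSide b a, m x) /
          (2 * T.w a b * ∑ x, m x) := fun a b hb => by
    have hab := (T.G.mem_neighborFinset a b).1 hb
    exact div_le_div_of_nonneg_right (hT.mul_sub_le_sum_edgeSide_mul hab (fun u => (hm u).le)
      (ht a b hab) (ht' a b hab)) (hpos a b hab).le
  obtain ⟨a, b, hab, ⟨z, haz, hzb⟩, z', hbz', hz'a⟩ :=
    hT.exists_internal_edge (by simpa using hn) hnstar
  refine Finset.sum_lt_sum (fun a _ => Finset.sum_le_sum (hle a)) ⟨a, Finset.mem_univ a,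
    Finset.sum_lt_sum (hle a) ⟨b, (T.G.mem_neighborFinset a b).2 hab, ?_⟩⟩
  exact div_lt_div_of_pos_right (hT.mul_sub_lt_sum_edgeSide_mul hab hm (ht a b hab)
    (ht' a b hab) haz hzb hbz' hz'a) (hpos a b hab)

theorem sumInvEig_scaledLap_lt (hn : 3 ≤ n) {S : WGraph n} (hT : T.G.IsTree)
    (hS : S.G.IsTree) (hw : T.edgeWeights = S.edgeWeights) {mT mS : Fin n → ℝ}
    (hmT : ∀ u, 0 < mT u) (hmS : ∀ u, 0 < mS u) (hν : ∑ u, mT u = ∑ u, mS u) (t : ℝ → ℝ)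
    (htT : ∀ a b, T.G.Adj a b → t (T.w a b) ≤ mT a)
    (htS : ∀ a b, S.G.Adj a b → (∀ z, S.G.Adj a z → z = b) → mS a = t (S.w a b))
    (hstar : ∃ c, S.G = SimpleGraph.starGraph c)
    (hnstar : ¬ ∃ c, T.G = SimpleGraph.starGraph c) :
    sumInvEig (S.scaledLap mS) < sumInvEig (T.scaledLap mT) := by
  obtain ⟨c, hc⟩ := hstar
  rw [sumInvEig_scaledLap_of_eq_starGraph hS hmS t htS hc, ← hν,
    S.sum_sum_neighborFinset_w fun ω => t ω * (∑ u, mT u - t ω) / (2 * ω * ∑ u, mT u), ← hw,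
    ← T.sum_sum_neighborFinset_w fun ω => t ω * (∑ u, mT u - t ω) / (2 * ω * ∑ u, mT u)]
  exact lt_sumInvEig_scaledLap hn hT hmT t htT hnstar

end WGraph

theorem stmt18_general (W : Multiset ℝ) (hcard : 2 ≤ Multiset.card W) {n : ℕ}
    (T S : WGraph n) (hT : T.G.IsTree) (hS : S.G.IsTree)
    (hwT : T.edgeWeights = W) (hwS : S.edgeWeights = W)
    (hstar : Nonempty (S.G ≃g starGraph n)) (hnstar : ¬ Nonempty (T.G ≃g starGraph n)) :
    sumInvEig S.lap < sumInvEig T.lap ∧ sumInvEig S.nlap < sumInvEig T.nlap := by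
  have hn : 3 ≤ n := by
    have := T.card_edgeWeights hT
    rw [hwT] at this
    omega
  have hw := hwT.trans hwS.symm
  have hSstar := exists_eq_starGraph_of_iso (by omega) hstar.some
  have hTstar : ¬ ∃ c, T.G = SimpleGraph.starGraph c := fun ⟨c, hc⟩ =>
    hnstar (hc ▸ nonempty_starGraph_iso c)
  constructor
  · rw [T.lap_eq_scaledLap_one, S.lap_eq_scaledLap_one]
    exact WGraph.sumInvEig_scaledLap_lt hn hT hS hw (fun _ => one_pos) (fun _ => one_pos) rfl
      (fun _ => 1) (fun _ _ _ => le_rfl) (fun _ _ _ _ => rfl) hSstar hTstar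
  · rw [T.nlap_eq_scaledLap_deg, S.nlap_eq_scaledLap_deg]
    exact WGraph.sumInvEig_scaledLap_lt hn hT hS hw (T.deg_pos hT (by omega))
      (S.deg_pos hS (by omega)) (by rw [T.sum_deg, S.sum_deg, hw]) id
      (fun a b _ => T.w_le_deg a b) (fun a b hab h => S.deg_eq_w_of_forall_adj hab h) hSstar hTstar

theorem stmt18 (W : Multiset ℝ) (hW : ∀ x ∈ W, 0 < x) (hcard : 2 ≤ Multiset.card W) {n : ℕ}
    (T S : WGraph n) (hT : T.G.IsTree) (hS : S.G.IsTree)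
    (hwT : T.edgeWeights = W) (hwS : S.edgeWeights = W)
    (hstar : Nonempty (S.G ≃g starGraph n)) (hnstar : ¬ Nonempty (T.G ≃g starGraph n)) :
    sumInvEig S.lap < sumInvEig T.lap ∧ sumInvEig S.nlap < sumInvEig T.nlap :=
  stmt18_general W hcard T S hT hS hwT hwS hstar hnstar
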